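/- arXiv:2212.03900 — 3 statements merged into one kernel-verified Lean document; each statement's English description precedes it below -/
import Mathlib

section
/- For any positive invertible bounded operator T on H ⊕ H and any real α, the operator (JT)² + αI is compact if and only if (√T J √T)ᵀ(√T J √T) - αI is compact, where J(x,y) = (y,-x) and √T is the positive square root of T. -/
/-!
Put `A = √T J √T`. Since `J` is skew-adjoint and `√T` self-adjoint, `A* A = -A² = -√T J T J √T`,
and `√T J T J √T = √T (JT)² √T⁻¹`. Hence `A* A - α = -√T ((JT)² + α) √T⁻¹`: up to sign the two
operators are conjugate by `√T`, which is invertible because its square `T` is, and compactness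
is invariant under negation and under conjugation by an invertible bounded operator.
-/

theorem isCompactOperator_neg_iff {M₁ M₂ : Type*} [TopologicalSpace M₁] [AddCommMonoid M₁]
    [TopologicalSpace M₂] [AddCommGroup M₂] [ContinuousNeg M₂] {f : M₁ → M₂} :
    IsCompactOperator (-f) ↔ IsCompactOperator f :=
  ⟨fun h ↦ neg_neg f ▸ h.neg, IsCompactOperator.neg⟩

section Conj

variable {R M : Type*} [Semiring R] [TopologicalSpace M] [AddCommMonoid M] [Module R M]

theorem IsCompactOperator.units_conj {f : M →L[R] M} (hf : IsCompactOperator f)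
    (u : (M →L[R] M)ˣ) : IsCompactOperator ⇑(↑u * f * ↑u⁻¹) :=
  (hf.comp_clm _).clm_comp (u : M →L[R] M)

theorem isCompactOperator_units_conj_iff (u : (M →L[R] M)ˣ) (f : M →L[R] M) :
    IsCompactOperator ⇑(↑u * f * ↑u⁻¹) ↔ IsCompactOperator f :=
  ⟨fun h ↦ by simpa [mul_assoc] using h.units_conj u⁻¹, fun h ↦ h.units_conj u⟩

end Conj

theorem star_mul_self_sub_smul_one_eq_neg_units_conj {K A : Type*} [CommSemiring K] [Ring A]
    [StarRing A] [Algebra K A] (s : Aˣ) {J : A} (hJ : star J = -J) (hs : star (s : A) = s)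
    (α : K) :
    star (s * J * s) * (s * J * s) - α • 1 =
      -(s * (J * (s * s) * (J * (s * s)) + α • 1) * ↑s⁻¹) := by
  have hconj : (s : A) * (α • 1) * ↑s⁻¹ = α • 1 := by simp
  simp only [star_mul, hJ, hs, mul_add, add_mul, hconj]
  simp only [mul_assoc, Units.mul_inv, mul_one]
  noncomm_ring

open ContinuousLinearMap

theorem compact_JT_sq_iff_sqrtT_form_general
    {E : Type*} [NormedAddCommGroup E] [InnerProductSpace ℝ E] [CompleteSpace E]
    (J T sqrtT : E →L[ℝ] E)
    (hJadj : ContinuousLinearMap.adjoint J = -J)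
    (hTunit : IsUnit T)
    (hs : sqrtT.IsPositive) (hsq : sqrtT * sqrtT = T)
    (α : ℝ) :
    IsCompactOperator ⇑((J * T) * (J * T) + α • (1 : E →L[ℝ] E)) ↔
      IsCompactOperator
        ⇑(ContinuousLinearMap.adjoint (sqrtT * J * sqrtT) * (sqrtT * J * sqrtT)
          - α • (1 : E →L[ℝ] E)) := by
  subst hsq
  obtain ⟨s, rfl⟩ := isUnit_mul_self_iff.mp hTunit
  rw [← star_eq_adjoint] at hJadj ⊢
  rw [star_mul_self_sub_smul_one_eq_neg_units_conj s hJadj hs.isSelfAdjoint.star_eq α,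
    FunLike.coe_neg, isCompactOperator_neg_iff, isCompactOperator_units_conj_iff]

/-- For a positive invertible operator `T` on a real Hilbert space `H ⊕ H` (with the
symplectic involution `J`, `J² = -I`, `Jᵀ = -J`) and any real `α`, the operator
`(JT)² + αI` is compact if and only if `(√T J √T)ᵀ (√T J √T) - αI` is compact, where
`√T` is the (unique) positive square root of `T`. -/
theorem compact_JT_sq_iff_sqrtT_form
    {E : Type*} [NormedAddCommGroup E] [InnerProductSpace ℝ E] [CompleteSpace E]
    [TopologicalSpace.SeparableSpace E]
    (J T sqrtT : E →L[ℝ] E)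
    (hJ2 : J * J = -1) (hJadj : ContinuousLinearMap.adjoint J = -J)
    (hT : T.IsPositive) (hTunit : IsUnit T)
    (hs : sqrtT.IsPositive) (hsq : sqrtT * sqrtT = T)
    (α : ℝ) :
    IsCompactOperator ⇑((J * T) * (J * T) + α • (1 : E →L[ℝ] E)) ↔
      IsCompactOperator
        ⇑(ContinuousLinearMap.adjoint (sqrtT * J * sqrtT) * (sqrtT * J * sqrtT)
          - α • (1 : E →L[ℝ] E)) :=
  compact_JT_sq_iff_sqrtT_form_general J T sqrtT hJadj hTunit hs hsq α
end

section
/- Let T be a positive invertible operator on H ⊕ H with T - αI compact for some nonzero real α. Then for every j ≥ 1, the j-th largest symplectic eigenvalue of T is at most the j-th largest eigenvalue of T: d_j↓(T) ≤ λ_j↓(T). -/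
/-! Because `A` is a self-adjoint involution it is unitary, hence `A ≤ 1` in the Loewner
order, and conjugating by the self-adjoint `√T` gives `R = √T A √T ≤ √T √T = T`. The max–min
values are monotone in the Loewner order, since each Rayleigh quotient of `R` is at most that
of `T`. -/

open ContinuousLinearMap

noncomputable section

/-- The `n`-th largest eigenvalue (counted with multiplicity, `n` starting from `0`) of a
self-adjoint operator `T`, given by the Courant–Fischer max-min formula: the sup over
`(n+1)`-dimensional subspaces `N` of the inf of the Rayleigh quotient over unit vectors
of `N`. -/
def nthEigenMax {E : Type*} [NormedAddCommGroup E] [InnerProductSpace ℂ E]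
    (T : E →L[ℂ] E) (n : ℕ) : ℝ :=
  sSup {r : ℝ | ∃ N : Submodule ℂ E, Module.finrank ℂ N = n + 1 ∧
    r = sInf {c : ℝ | ∃ x : E, x ∈ N ∧ ‖x‖ = 1 ∧ c = (inner ℂ (T x) x : ℂ).re}}

lemma setOf_exists_and_eq_eq_range {α β : Type*} (p : α → Prop) (f : α → β) :
    {b | ∃ a, p a ∧ b = f a} = Set.range fun a : {a // p a} => f a := by
  ext b
  simp [eq_comm]

lemma IsSelfAdjoint.le_one_of_mul_self_eq_one {A : Type*} [CStarAlgebra A] [PartialOrder A]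
    [StarOrderedRing A] {a : A} (ha : IsSelfAdjoint a) (h : a * a = 1) : a ≤ 1 := by
  nontriviality A
  have hu : a ∈ unitary A := Unitary.mem_iff.2 ⟨by rw [ha.star_eq, h], by rw [ha.star_eq, h]⟩
  simpa [CStarRing.norm_of_mem_unitary hu] using ha.le_algebraMap_norm_self

section Rayleigh

variable {E : Type*} [NormedAddCommGroup E] [InnerProductSpace ℂ E]

lemma abs_re_inner_apply_self_le_opNorm (T : E →L[ℂ] E) {x : E} (hx : ‖x‖ = 1) :
    |(inner ℂ (T x) x).re| ≤ ‖T‖ :=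
  calc |(inner ℂ (T x) x).re| ≤ ‖T x‖ * ‖x‖ :=
        (Complex.abs_re_le_norm _).trans (norm_inner_le_norm _ _)
    _ ≤ ‖T‖ := by simpa [hx] using T.le_opNorm x

lemma bddBelow_range_re_inner_apply_self (T : E →L[ℂ] E) (N : Submodule ℂ E) :
    BddBelow (Set.range fun x : {x : E // x ∈ N ∧ ‖x‖ = 1} => (inner ℂ (T x) x).re) := by
  refine ⟨-‖T‖, ?_⟩
  rintro _ ⟨x, rfl⟩
  exact neg_le_of_abs_le (abs_re_inner_apply_self_le_opNorm T x.2.2)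

-- For `N = ⊥` the index type is empty and the infimum is the junk value `0`, still `≤ ‖T‖`.
lemma iInf_re_inner_apply_self_le_opNorm (T : E →L[ℂ] E) (N : Submodule ℂ E) :
    ⨅ x : {x : E // x ∈ N ∧ ‖x‖ = 1}, (inner ℂ (T x) x).re ≤ ‖T‖ := by
  rcases isEmpty_or_nonempty {x : E // x ∈ N ∧ ‖x‖ = 1} with h | ⟨⟨x⟩⟩
  · simp [Real.iInf_of_isEmpty]
  · exact ciInf_le_of_le (bddBelow_range_re_inner_apply_self T N) x
      (le_of_abs_le (abs_re_inner_apply_self_le_opNorm T x.2.2))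

lemma nthEigenMax_eq_iSup_iInf (T : E →L[ℂ] E) (n : ℕ) :
    nthEigenMax T n = ⨆ N : {N : Submodule ℂ E // Module.finrank ℂ N = n + 1},
      ⨅ x : {x : E // x ∈ N.1 ∧ ‖x‖ = 1}, (inner ℂ (T x) x).re := by
  simp only [nthEigenMax, ← and_assoc]
  simp only [setOf_exists_and_eq_eq_range, iSup, iInf]

lemma nthEigenMax_mono {S T : E →L[ℂ] E} (hST : S ≤ T) (n : ℕ) :
    nthEigenMax S n ≤ nthEigenMax T n := by
  rw [nthEigenMax_eq_iSup_iInf, nthEigenMax_eq_iSup_iInf]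
  refine ciSup_mono ⟨‖T‖, ?_⟩ fun N =>
    ciInf_mono (bddBelow_range_re_inner_apply_self S N) fun x => ?_
  · rintro _ ⟨N, rfl⟩
    exact iInf_re_inner_apply_self_le_opNorm T N
  · simpa [inner_sub_left] using ((le_def S T).1 hST).re_inner_nonneg_left x

end Rayleigh

theorem symplectic_eigenvalue_le_eigenvalue_general
    {E : Type*} [NormedAddCommGroup E] [InnerProductSpace ℂ E] [CompleteSpace E]
    (T A sqrtT R : E →L[ℂ] E)
    (hA : IsSelfAdjoint A) (hA2 : A * A = 1)
    (hs : sqrtT.IsPositive) (hsq : sqrtT * sqrtT = T)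
    (hR : R = sqrtT * A * sqrtT)
    (j : ℕ) :
    nthEigenMax R j ≤ nthEigenMax T j := by
  have hRT : R ≤ T :=
    calc R = sqrtT * A * sqrtT := hR
      _ ≤ sqrtT * 1 * sqrtT :=
        IsSelfAdjoint.conjugate_le_conjugate (hA.le_one_of_mul_self_eq_one hA2) hs.isSelfAdjoint
      _ = T := by rw [mul_one, hsq]
  exact nthEigenMax_mono hRT j

/-- Interlacing, decreasing case.  Let `T` be a positive invertible operator on `H ⊕ H`
with `T - αI` compact for some nonzero real `α` (everything viewed in the
complexification, where `A = iJ` is the self-adjoint unitary coming from the symplectic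
involution `J`).  The symplectic eigenvalues of `T`, arranged in decreasing order, are
the positive eigenvalues of `R = √T (iJ) √T` in decreasing order.  Then for every `j`,
the `j`-th largest symplectic eigenvalue of `T` is at most the `j`-th largest eigenvalue
of `T`: `d_j↓(T) ≤ λ_j↓(T)`. -/
theorem symplectic_eigenvalue_le_eigenvalue
    {E : Type*} [NormedAddCommGroup E] [InnerProductSpace ℂ E] [CompleteSpace E]
    [TopologicalSpace.SeparableSpace E]
    (T A sqrtT R : E →L[ℂ] E)
    (hT : T.IsPositive) (hTunit : IsUnit T)
    (α : ℝ) (hα : α ≠ 0)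
    (hcpt : IsCompactOperator ⇑(T - (α : ℂ) • (1 : E →L[ℂ] E)))
    (hA : IsSelfAdjoint A) (hA2 : A * A = 1)
    (hs : sqrtT.IsPositive) (hsq : sqrtT * sqrtT = T)
    (hR : R = sqrtT * A * sqrtT)
    (j : ℕ) :
    nthEigenMax R j ≤ nthEigenMax T j :=
  symplectic_eigenvalue_le_eigenvalue_general T A sqrtT R hA hA2 hs hsq hR j

end
end

section
/- For a positive invertible operator S satisfying (√S J √S)ᵀ(√S J √S) - I trace class, this condition is equivalent to (JS)² + I being trace class. -/
open ContinuousLinearMap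

/-- `T` is a Hilbert–Schmidt operator: the sums `∑ ‖T x‖²` over finite orthonormal
families are uniformly bounded. -/
def IsHilbertSchmidt {E : Type*} [NormedAddCommGroup E] [InnerProductSpace ℝ E]
    (T : E →L[ℝ] E) : Prop :=
  ∃ C : ℝ, ∀ s : Finset E, Orthonormal ℝ (fun x : s => (x : E)) →
    ∑ x ∈ s, ‖T x‖ ^ 2 ≤ C

/-- `T` is trace class: it is a product of two Hilbert–Schmidt operators. -/
def IsTraceClass {E : Type*} [NormedAddCommGroup E] [InnerProductSpace ℝ E]
    (T : E →L[ℝ] E) : Prop :=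
  ∃ A B : E →L[ℝ] E, IsHilbertSchmidt A ∧ IsHilbertSchmidt B ∧ T = A * B

/-!
Writing `S = s²` with `s = √S` invertible and self-adjoint, and `A = s J s`, the skew-adjointness
of `J` gives `A* A - 1 = -s ((J S)² + 1) s⁻¹`. Hilbert–Schmidt operators form a two-sided ideal
(the right ideal property comes from stability under adjoints), so trace class operators are
stable under multiplication by invertible operators on both sides, and the two conditions agree.
-/

open scoped InnerProduct

section

variable {E : Type*} [NormedAddCommGroup E] [InnerProductSpace ℝ E]

theorem sum_sq_norm_apply_le_of_orthonormal {T : E →L[ℝ] E} {C : ℝ}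
    (hC : ∀ s : Finset E, Orthonormal ℝ (fun x : s => (x : E)) → ∑ x ∈ s, ‖T x‖ ^ 2 ≤ C)
    {ι : Type*} [Fintype ι] {v : ι → E} (hv : Orthonormal ℝ v) :
    ∑ i, ‖T (v i)‖ ^ 2 ≤ C := by
  classical
  have hinj := hv.linearIndependent.injective
  rw [← Finset.sum_image (f := fun x => ‖T x‖ ^ 2) fun i _ j _ h => hinj h]
  refine hC _ (orthonormal_subtype_iff_ite.mpr ?_)
  simp only [Finset.coe_image, Finset.coe_univ, Set.image_univ, Set.forall_mem_range,
    hinj.eq_iff]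
  exact orthonormal_iff_ite.mp hv

namespace IsHilbertSchmidt

theorem mul_left {T : E →L[ℝ] E} (hT : IsHilbertSchmidt T) (U : E →L[ℝ] E) :
    IsHilbertSchmidt (U * T) := by
  obtain ⟨C, hC⟩ := hT
  refine ⟨‖U‖ ^ 2 * C, fun s hs => ?_⟩
  calc ∑ x ∈ s, ‖U (T x)‖ ^ 2 ≤ ∑ x ∈ s, ‖U‖ ^ 2 * ‖T x‖ ^ 2 :=
        Finset.sum_le_sum fun x _ => by rw [← mul_pow]; gcongr; exact U.le_opNorm _
    _ = ‖U‖ ^ 2 * ∑ x ∈ s, ‖T x‖ ^ 2 := (Finset.mul_sum ..).symm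
    _ ≤ ‖U‖ ^ 2 * C := by gcongr; exact hC s hs

variable [CompleteSpace E]

theorem adjoint {T : E →L[ℝ] E} (hT : IsHilbertSchmidt T) : IsHilbertSchmidt (T†) := by
  obtain ⟨C, hC⟩ := hT
  refine ⟨C, fun s hs => ?_⟩
  let W : Submodule ℝ E := Submodule.span ℝ (T† '' s)
  have : FiniteDimensional ℝ W := .span_of_finite ℝ (s.finite_toSet.image _)
  let b := stdOrthonormalBasis ℝ W
  have hb : Orthonormal ℝ fun i => (b i : E) := b.orthonormal.comp_linearIsometry W.subtypeₗᵢ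
  -- `‖(T†) x‖² = ∑ᵢ ⟪x, T bᵢ⟫²` for `x ∈ s`; summing over `x` first and using Bessel
  -- swaps the roles of `T` and `T†`.
  have expand : ∀ x ∈ s, ‖(T†) x‖ ^ 2 = ∑ i, ‖inner ℝ x (T (b i))‖ ^ 2 := by
    intro x hx
    have h := b.sum_sq_norm_inner_left ⟨(T†) x, Submodule.subset_span ⟨x, hx, rfl⟩⟩
    simpa only [Submodule.coe_inner, Submodule.coe_norm, adjoint_inner_left] using h.symm
  calc ∑ x ∈ s, ‖(T†) x‖ ^ 2 = ∑ i, ∑ x ∈ s, ‖inner ℝ x (T (b i))‖ ^ 2 := by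
        rw [Finset.sum_congr rfl expand, Finset.sum_comm]
    _ ≤ ∑ i, ‖T (b i)‖ ^ 2 := Finset.sum_le_sum fun i _ => by
        rw [← Finset.sum_coe_sort s]
        exact hs.sum_inner_products_le _
    _ ≤ C := sum_sq_norm_apply_le_of_orthonormal hC hb

theorem mul_right {T : E →L[ℝ] E} (hT : IsHilbertSchmidt T) (V : E →L[ℝ] E) :
    IsHilbertSchmidt (T * V) := by
  simpa only [mul_def, adjoint_comp, adjoint_adjoint] using
    (hT.adjoint.mul_left (V†)).adjoint

end IsHilbertSchmidt

namespace IsTraceClass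

theorem mul_left {T : E →L[ℝ] E} (hT : IsTraceClass T) (U : E →L[ℝ] E) :
    IsTraceClass (U * T) := by
  obtain ⟨A, B, hA, hB, rfl⟩ := hT
  exact ⟨U * A, B, hA.mul_left U, hB, (mul_assoc ..).symm⟩

variable [CompleteSpace E]

theorem mul_right {T : E →L[ℝ] E} (hT : IsTraceClass T) (V : E →L[ℝ] E) :
    IsTraceClass (T * V) := by
  obtain ⟨A, B, hA, hB, rfl⟩ := hT
  exact ⟨A, B * V, hA, hB.mul_right V, mul_assoc ..⟩

end IsTraceClass

theorem isTraceClass_units_mul_mul_iff [CompleteSpace E] (u v : (E →L[ℝ] E)ˣ)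
    (T : E →L[ℝ] E) :
    IsTraceClass ((u : E →L[ℝ] E) * T * (v : E →L[ℝ] E)) ↔ IsTraceClass T := by
  refine ⟨fun h => ?_, fun h => (h.mul_left _).mul_right _⟩
  simpa [mul_assoc] using (h.mul_left ↑u⁻¹).mul_right ↑v⁻¹

end

theorem star_conj_mul_conj_sub_one {R : Type*} [Ring R] [StarRing R] {J : R}
    (hJ : star J = -J) (s : Rˣ) (hs : star (s : R) = s) :
    star (↑s * J * ↑s) * (↑s * J * ↑s) - 1 =
      ↑(-s) * (J * (↑s * ↑s) * (J * (↑s * ↑s)) + 1) * ↑s⁻¹ := by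
  simp only [star_mul, hJ, hs, Units.val_neg, mul_add, add_mul, mul_one, mul_assoc,
    Units.mul_inv, neg_mul, mul_neg]
  noncomm_ring

theorem traceClass_equiv_conditions_general
    {E : Type*} [NormedAddCommGroup E] [InnerProductSpace ℝ E] [CompleteSpace E]
    (J S sqrtS : E →L[ℝ] E)
    (hJadj : ContinuousLinearMap.adjoint J = -J)
    (hSunit : IsUnit S)
    (hs : sqrtS.IsPositive) (hsq : sqrtS * sqrtS = S) :
    IsTraceClass
        (ContinuousLinearMap.adjoint (sqrtS * J * sqrtS) * (sqrtS * J * sqrtS) - 1) ↔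
      IsTraceClass ((J * S) * (J * S) + 1) := by
  obtain ⟨s, rfl⟩ : IsUnit sqrtS := isUnit_mul_self_iff.mp (hsq ▸ hSunit)
  subst hsq
  rw [← star_eq_adjoint, star_conj_mul_conj_sub_one ((star_eq_adjoint J).trans hJadj) s
    hs.isSelfAdjoint.star_eq, isTraceClass_units_mul_mul_iff]

/-- For a positive invertible operator `S` on `H ⊕ H` (with the symplectic involution
`J`, `J² = -I`, `Jᵀ = -J`, and `√S` the positive square root of `S`), the condition
`(√S J √S)ᵀ (√S J √S) - I` trace class is equivalent to `(JS)² + I` trace class. -/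
theorem traceClass_equiv_conditions
    {E : Type*} [NormedAddCommGroup E] [InnerProductSpace ℝ E] [CompleteSpace E]
    [TopologicalSpace.SeparableSpace E]
    (J S sqrtS : E →L[ℝ] E)
    (hJ2 : J * J = -1) (hJadj : ContinuousLinearMap.adjoint J = -J)
    (hS : S.IsPositive) (hSunit : IsUnit S)
    (hs : sqrtS.IsPositive) (hsq : sqrtS * sqrtS = S) :
    IsTraceClass
        (ContinuousLinearMap.adjoint (sqrtS * J * sqrtS) * (sqrtS * J * sqrtS) - 1) ↔
      IsTraceClass ((J * S) * (J * S) + 1) :=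
  traceClass_equiv_conditions_general J S sqrtS hJadj hSunit hs hsq
end
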